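/- Let $(r,m,l)$ be a representation of a Leibniz triple system $\mathfrak{L}$ on $V$. A linear map $T:V\to\mathfrak{L}$ is a relative Rota-Baxter operator if and only if the linear map $\widetilde{T}:\mathfrak{L}\oplus V\to\mathfrak{L}\oplus V$ defined by $\widetilde{T}(x+u)=x+Tu$ is a Nijenhuis operator on the semidirect product Leibniz triple system. -/

import Mathlib

def IsTrilin (K : Type*) [Field K] {L M : Type*} [AddCommGroup L] [Module K L]
    [AddCommGroup M] [Module K M] (t : L → L → L → M) : Prop :=
  (∀ y z, IsLinearMap K fun x => t x y z) ∧ (∀ x z, IsLinearMap K fun y => t x y z) ∧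
    (∀ x y, IsLinearMap K fun z => t x y z)

def LTSIdent {L : Type*} [AddCommGroup L] (t : L → L → L → L) : Prop :=
  (∀ a b c d e, t a b (t c d e) =
      t (t a b c) d e - t (t a b d) c e - t (t a b e) c d + t (t a b e) d c) ∧
  (∀ a b c d e, t a (t b c d) e =
      t (t a b c) d e - t (t a c b) d e - t (t a d b) c e + t (t a d c) b e)

def IsLTS (K : Type*) [Field K] {L : Type*} [AddCommGroup L] [Module K L]
    (t : L → L → L → L) : Prop := IsTrilin K t ∧ LTSIdent t

def sd {L V : Type*} [AddCommGroup L] [AddCommGroup V]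
    (t : L → L → L → L) (l m r : L → L → V → V) :
    L × V → L × V → L × V → L × V :=
  fun p q s => (t p.1 q.1 s.1, l p.1 q.1 s.2 + m p.1 s.1 q.2 + r q.1 s.1 p.2)

def IsRep (K : Type*) [Field K] {L V : Type*} [AddCommGroup L] [Module K L]
    [AddCommGroup V] [Module K V] (t : L → L → L → L) (l m r : L → L → V → V) : Prop :=
  IsLTS K (sd t l m r)

def IsRRB {K : Type*} [Field K] {L V : Type*} [AddCommGroup L] [Module K L]
    [AddCommGroup V] [Module K V] (t : L → L → L → L) (l m r : L → L → V → V)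
    (T : V →ₗ[K] L) : Prop :=
  ∀ u v w, t (T u) (T v) (T w) =
    T (l (T u) (T v) w + m (T u) (T w) v + r (T v) (T w) u)

def IsRB {K : Type*} [Field K] {L : Type*} [AddCommGroup L] [Module K L]
    (t : L → L → L → L) (R : L →ₗ[K] L) : Prop :=
  ∀ x y z, t (R x) (R y) (R z) =
    R (t (R x) (R y) z + t (R x) y (R z) + t x (R y) (R z))

def IsNij {K : Type*} [Field K] {A : Type*} [AddCommGroup A] [Module K A]
    (t : A → A → A → A) (N : A →ₗ[K] A) : Prop :=
  ∀ x y z, t (N x) (N y) (N z) =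
    N (t (N x) (N y) z) + N (t x (N y) (N z)) + N (t (N x) y (N z))
      - N (N (t (N x) y z)) - N (N (t x (N y) z)) - N (N (t x y (N z)))
      + N (N (N (t x y z)))

/-!
`T̃` is idempotent and its image `L ⊕ 0` is a subsystem on which `T̃` is the identity. For such an
operator the Nijenhuis identity says exactly that `T̃` kills brackets of elements of its kernel.
These elements are `-T u + u`, and `T̃` of their bracket is the defect of the relative
Rota-Baxter identity at `u, v, w`.
-/

namespace IsTrilin

variable {K : Type*} [Field K] {L M : Type*} [AddCommGroup L] [Module K L]
  [AddCommGroup M] [Module K M] {t : L → L → L → M}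

theorem map_zero₁ (h : IsTrilin K t) (y z : L) : t 0 y z = 0 := (h.1 y z).map_zero

theorem map_zero₂ (h : IsTrilin K t) (x z : L) : t x 0 z = 0 := (h.2.1 x z).map_zero

theorem map_zero₃ (h : IsTrilin K t) (x y : L) : t x y 0 = 0 := (h.2.2 x y).map_zero

theorem map_neg₁ (h : IsTrilin K t) (x y z : L) : t (-x) y z = -t x y z := (h.1 y z).map_neg x

theorem map_neg₂ (h : IsTrilin K t) (x y z : L) : t x (-y) z = -t x y z := (h.2.1 x z).map_neg y

theorem map_neg₃ (h : IsTrilin K t) (x y z : L) : t x y (-z) = -t x y z := (h.2.2 x y).map_neg z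

theorem map_sub₁ (h : IsTrilin K t) (x x' y z : L) : t (x - x') y z = t x y z - t x' y z :=
  (h.1 y z).map_sub x x'

theorem map_sub₂ (h : IsTrilin K t) (x y y' z : L) : t x (y - y') z = t x y z - t x y' z :=
  (h.2.1 x z).map_sub y y'

theorem map_sub₃ (h : IsTrilin K t) (x y z z' : L) : t x y (z - z') = t x y z - t x y z' :=
  (h.2.2 x y).map_sub z z'

end IsTrilin

/-- For `N² = N` the right-hand side of the Nijenhuis identity is
`N [Nx, Ny, Nz] + N [(1 - N)x, (1 - N)y, (1 - N)z]`. -/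
theorem isNij_iff_of_idempotent {K : Type*} [Field K] {A : Type*} [AddCommGroup A] [Module K A]
    {t : A → A → A → A} (ht : IsTrilin K t) {N : A →ₗ[K] A} (hN : ∀ x, N (N x) = N x)
    (hrange : ∀ x y z, N (t (N x) (N y) (N z)) = t (N x) (N y) (N z)) :
    IsNij t N ↔ ∀ x y z, N (t (x - N x) (y - N y) (z - N z)) = 0 := by
  have key : ∀ x y z,
      N (t (N x) (N y) z) + N (t x (N y) (N z)) + N (t (N x) y (N z))
        - N (N (t (N x) y z)) - N (N (t x (N y) z)) - N (N (t x y (N z)))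
        + N (N (N (t x y z))) =
      t (N x) (N y) (N z) + N (t (x - N x) (y - N y) (z - N z)) := by
    intro x y z
    simp only [ht.map_sub₁, ht.map_sub₂, ht.map_sub₃, map_sub, hN, hrange]
    abel
  simp only [IsNij, key, left_eq_add]

section SemidirectProduct

variable {K : Type*} [Field K] {L V : Type*} [AddCommGroup L] [Module K L]
  [AddCommGroup V] [Module K V] {t : L → L → L → L} {l m r : L → L → V → V}

/-- Trilinearity of `sd` forces this although `l`, `m`, `r` themselves need not be linear:
their constant parts cancel against brackets with a zero argument. -/
theorem sd_snd_eq (h : IsTrilin K (sd t l m r)) (a b c : L) (u v w : V) :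
    (sd t l m r (a, u) (b, v) (c, w)).2 =
      (sd t l m r (a, 0) (b, 0) (0, w)).2 + (sd t l m r (a, 0) (0, v) (c, 0)).2
        + (sd t l m r (0, u) (b, 0) (c, 0)).2 := by
  have hzero : (sd t l m r (a, 0) 0 0).2 + (sd t l m r 0 (b, 0) 0).2
      + (sd t l m r 0 0 (c, 0)).2 - (sd t l m r 0 0 0).2 = 0 := by
    simp only [h.map_zero₁, h.map_zero₂, Prod.snd_zero, add_zero, sub_zero]
  refine sub_eq_zero.mp (Eq.trans ?_ (neg_eq_zero.mpr hzero))
  simp only [sd, Prod.fst_zero, Prod.snd_zero]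
  abel

theorem sd_mk_zero (h : IsTrilin K (sd t l m r)) (a b c : L) :
    sd t l m r (a, 0) (b, 0) (c, 0) = (t a b c, 0) := by
  refine Prod.ext rfl ?_
  rw [sd_snd_eq h, Prod.mk_zero_zero, h.map_zero₁, h.map_zero₂, h.map_zero₃]
  simp

theorem sd_snd_neg (h : IsTrilin K (sd t l m r)) (a b c : L) (u v w : V) :
    (sd t l m r (a, -u) (b, -v) (c, -w)).2 = -(sd t l m r (a, u) (b, v) (c, w)).2 := by
  have hneg : ∀ x : V, ((0 : L), -x) = -((0 : L), x) := fun x => by simp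
  rw [sd_snd_eq h a b c (-u), sd_snd_eq h a b c u, hneg, hneg, hneg,
    h.map_neg₁, h.map_neg₂, h.map_neg₃]
  simp only [Prod.snd_neg]
  abel

/-- The operator `T̃` of the paper. -/
def extendOp (T : V →ₗ[K] L) : L × V →ₗ[K] L × V :=
  (LinearMap.fst K L V + T ∘ₗ LinearMap.snd K L V).prod 0

@[simp]
theorem extendOp_apply (T : V →ₗ[K] L) (p : L × V) : extendOp T p = (p.1 + T p.2, 0) := rfl

theorem extendOp_extendOp (T : V →ₗ[K] L) (p : L × V) :
    extendOp T (extendOp T p) = extendOp T p := by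
  simp

theorem extendOp_sd_extendOp (h : IsTrilin K (sd t l m r)) (T : V →ₗ[K] L) (p q s : L × V) :
    extendOp T (sd t l m r (extendOp T p) (extendOp T q) (extendOp T s)) =
      sd t l m r (extendOp T p) (extendOp T q) (extendOp T s) := by
  simp [sd_mk_zero h]

theorem extendOp_sd_sub (h : IsTrilin K (sd t l m r)) (T : V →ₗ[K] L) (p q s : L × V) :
    extendOp T (sd t l m r (p - extendOp T p) (q - extendOp T q) (s - extendOp T s)) =
      (T (l (T p.2) (T q.2) s.2 + m (T p.2) (T s.2) q.2 + r (T q.2) (T s.2) p.2)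
        - t (T p.2) (T q.2) (T s.2), 0) := by
  have hsub : ∀ x : L × V, x - extendOp T x = -(T x.2, -x.2) := fun x => by
    ext <;> simp
  rw [hsub, hsub, hsub, h.map_neg₁, h.map_neg₂, h.map_neg₃, neg_neg, map_neg,
    extendOp_apply, sd_snd_neg h]
  ext
  · simp only [sd, Prod.fst_neg, map_add, map_neg]
    abel
  · simp

end SemidirectProduct

theorem stmt5 {K : Type*} [Field K] {L V : Type*} [AddCommGroup L] [Module K L]
    [AddCommGroup V] [Module K V]
    (t : L → L → L → L) (l m r : L → L → V → V)
    (hrep : IsRep K t l m r) (T : V →ₗ[K] L) :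
    IsRRB t l m r T ↔
      IsNij (sd t l m r)
        ((LinearMap.fst K L V + T ∘ₗ LinearMap.snd K L V).prod
          (0 : L × V →ₗ[K] V)) := by
  change _ ↔ IsNij _ (extendOp T)
  rw [isNij_iff_of_idempotent hrep.1 (extendOp_extendOp T) (extendOp_sd_extendOp hrep.1 T)]
  simp only [extendOp_sd_sub hrep.1, Prod.mk_eq_zero, and_true, sub_eq_zero]
  exact ⟨fun hT p q s => (hT p.2 q.2 s.2).symm, fun hN u v w => (hN (0, u) (0, v) (0, w)).symm⟩
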